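/- arXiv:math/0112211 — 2 statements merged into one kernel-verified Lean document; each statement's English description precedes it below -/
import Mathlib

section
/- Let N ≥ 1 and let τ ∈ ℂ[[z]] have zero constant coefficient and nonzero coefficient of z. Then there exists an N-special series ρ ∈ ℂ[[t]] such that ρ(t)^N = τ(t^N), where τ(t^N) denotes the substitution of t^N into τ. (Hence the homomorphism μ : Aut_N(O) → Aut(O) is surjective.) -/
/-!
Write `τ = z * v` with `v(0) ≠ 0`. By Hensel's lemma in `ℂ⟦t⟧`, `v` has an `N`-th root `s`, and
`ρ = t * s(t ^ N)` works: `ρ ^ N = t ^ N * v(t ^ N) = τ(t ^ N)`, and `ρ` only involves the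
monomials `t ^ (1 + N * k)`.
-/

open PowerSeries

/-- Substitution of the power series `a` (assumed to have zero constant
coefficient) into the power series `g`:  `substC a g = g ∘ a = g(a)`. -/
noncomputable def PowerSeries.substC (a g : PowerSeries ℂ) : PowerSeries ℂ :=
  PowerSeries.mk fun n =>
    ∑ k ∈ Finset.range (n + 1), PowerSeries.coeff k g * PowerSeries.coeff n (a ^ k)

/-- A series `ρ ∈ ℂ[[t]]` is `N`-special if its constant coefficient is `0`,
its coefficient of `t^n` vanishes for every `n ≢ 1 (mod N)`, and its
coefficient of `t` is nonzero. -/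
def IsNSpecial (N : ℕ) (ρ : PowerSeries ℂ) : Prop :=
  PowerSeries.constantCoeff ρ = 0 ∧
    (∀ n : ℕ, n % N ≠ 1 % N → PowerSeries.coeff n ρ = 0) ∧
    PowerSeries.coeff 1 ρ ≠ 0

namespace PowerSeries

variable {R : Type*} [CommSemiring R]

theorem coeff_pow_eq_zero_of_lt {a : R⟦X⟧} (ha : constantCoeff a = 0) {n d : ℕ} (h : n < d) :
    coeff n (a ^ d) = 0 :=
  X_pow_dvd_iff.mp (pow_dvd_pow_of_dvd (X_dvd_iff.mpr ha) d) n h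

theorem substC_eq_subst {a : ℂ⟦X⟧} (ha : constantCoeff a = 0) (g : ℂ⟦X⟧) :
    substC a g = subst a g := by
  ext n
  rw [substC, coeff_mk, coeff_subst' (HasSubst.of_constantCoeff_zero' ha),
    finsum_eq_sum_of_support_subset _ (s := Finset.range (n + 1))]
  · simp only [smul_eq_mul]
  · intro d hd
    rw [Finset.mem_coe, Finset.mem_range]
    by_contra! h
    exact hd (by simp only [coeff_pow_eq_zero_of_lt ha (by omega : n < d), smul_zero])

theorem substC_X_pow_eq_expand {N : ℕ} (hN : N ≠ 0) (g : ℂ⟦X⟧) :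
    substC (X ^ N) g = expand N hN g := by
  rw [substC_eq_subst (by simp [hN]), expand_apply]

/-- Hensel's lemma applied to `Y ^ N - v` at the approximate root `d`. -/
theorem exists_pow_eq_of_constantCoeff_eq_pow {K : Type*} [Field K] {N : ℕ} (hN : (N : K) ≠ 0)
    {v : K⟦X⟧} {d : K} (hd : d ^ N = constantCoeff v) (hd0 : d ≠ 0) :
    ∃ s : K⟦X⟧, s ^ N = v ∧ constantCoeff s = d := by
  have hN0 : N ≠ 0 := by rintro rfl; exact hN Nat.cast_zero
  let F : Polynomial K⟦X⟧ := Polynomial.X ^ N - Polynomial.C v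
  have hF_approx : F.eval (C d) ∈ Ideal.span {X} := by
    simp [F, Ideal.mem_span_singleton, X_dvd_iff, hd]
  have hF'_unit : IsUnit (Ideal.Quotient.mk (Ideal.span {X}) (F.derivative.eval (C d))) := by
    refine IsUnit.map _ (isUnit_iff_constantCoeff.mpr ?_)
    simpa [F, Polynomial.derivative_X_pow] using mul_ne_zero hN (pow_ne_zero (N - 1) hd0)
  obtain ⟨s, hs, hsd⟩ := HenselianRing.is_henselian F (Polynomial.monic_X_pow_sub_C v hN0) (C d)
    hF_approx hF'_unit
  refine ⟨s, sub_eq_zero.mp (by simpa [F] using hs), ?_⟩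
  rwa [Ideal.mem_span_singleton, X_dvd_iff, map_sub, constantCoeff_C, sub_eq_zero] at hsd

theorem isNSpecial_X_mul_expand {N : ℕ} (hN : N ≠ 0) {s : ℂ⟦X⟧} (hs : constantCoeff s ≠ 0) :
    IsNSpecial N (X * expand N hN s) := by
  refine ⟨by simp, fun n hn => ?_, by simpa [coeff_expand] using hs⟩
  obtain _ | m := n
  · simp
  rw [coeff_succ_X_mul, coeff_expand_of_not_dvd]
  intro hm
  exact hn ((Nat.modEq_zero_iff_dvd.mpr hm).add_right 1)

end PowerSeries

/-- Every `τ` with zero constant coefficient and nonzero linear coefficient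
has an `N`-special `N`-th root: `ρ(t)^N = τ(t^N)`.  (Surjectivity of `μ`.) -/
theorem stmt8 (N : ℕ) (hN : 1 ≤ N) (τ : PowerSeries ℂ)
    (h0 : PowerSeries.constantCoeff τ = 0)
    (h1 : PowerSeries.coeff 1 τ ≠ 0) :
    ∃ ρ : PowerSeries ℂ, IsNSpecial N ρ ∧
      ρ ^ N = PowerSeries.substC (PowerSeries.X ^ N) τ := by
  have hN0 : N ≠ 0 := by omega
  obtain ⟨v, rfl⟩ := X_dvd_iff.mpr h0
  have hv : constantCoeff v ≠ 0 := by simpa using h1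
  obtain ⟨d, hd⟩ := IsAlgClosed.exists_pow_nat_eq (constantCoeff v) (Nat.pos_of_ne_zero hN0)
  have hd0 : d ≠ 0 := by rintro rfl; exact hv (by rw [← hd, zero_pow hN0])
  obtain ⟨s, rfl, hs⟩ := exists_pow_eq_of_constantCoeff_eq_pow (Nat.cast_ne_zero.mpr hN0) hd hd0
  refine ⟨X * expand N hN0 s, isNSpecial_X_mul_expand hN0 (hs ▸ hd0), ?_⟩
  rw [substC_X_pow_eq_expand hN0, map_mul, map_pow, expand_X, mul_pow]
end

section
/- Let N ≥ 1, let σ be a ℂ-algebra automorphism of ℂ[[t]], let ε ∈ ℂ be a primitive N-th root of unity, and let u₁, u₂ ∈ ℂ[[t]] be formal coordinates (zero constant coefficient, nonzero coefficient of t) satisfying σ(u₁) = ε·u₁ and σ(u₂) = ε·u₂. Then there exists a unique N-special series ρ ∈ ℂ[[t]] such that u₂ = ρ∘u₁, the substitution of u₁ into ρ. (Thus the group Aut_N(O) acts simply transitively on the set of special coordinates with eigenvalue ε, which is therefore an Aut_N(O)-torsor.) -/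
/-!
Substituting into a formal coordinate `u` is a triangular linear map with diagonal entries
`(coeff 1 u)^n`, hence a bijection of `ℂ⟦X⟧`; this gives a unique `ρ` with `u₂ = ρ ∘ u₁`.
An algebra automorphism `σ` maps non-units to non-units, so it preserves the `X`-adic filtration
and commutes with substitution: `σ (ρ ∘ u₁) = ρ ∘ (ε u₁) = ρ(ε t) ∘ u₁`. Applying `σ` to
`u₂ = ρ ∘ u₁` and cancelling the substitution gives `ρ(ε t) = ε ρ`, i.e. `ε^n = ε` whenever the
`n`-th coefficient of `ρ` is nonzero, which forces `n ≡ 1 (mod N)`.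
-/

open PowerSeries

namespace PowerSeries

section Pow

variable {R : Type*} [CommSemiring R] {u : R⟦X⟧}

lemma coeff_pow_eq_zero_of_lt_s14 (hu : constantCoeff u = 0) {n k : ℕ} (h : n < k) :
    coeff n (u ^ k) = 0 :=
  X_pow_dvd_iff.mp (pow_dvd_pow_of_dvd (X_dvd_iff.mpr hu) k) n h

lemma coeff_pow_self (hu : constantCoeff u = 0) (n : ℕ) : coeff n (u ^ n) = coeff 1 u ^ n := by
  obtain ⟨w, rfl⟩ := X_dvd_iff.mpr hu
  have hX : ∀ m (g : R⟦X⟧), coeff m (X ^ m * g) = constantCoeff g := fun m g => by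
    simpa using coeff_X_pow_mul g m 0
  rw [mul_pow, hX, map_pow, ← hX 1, pow_one]

end Pow

section AlgHom

variable {K F : Type*} [Field K] [FunLike F K⟦X⟧ K⟦X⟧] [AlgHomClass F K K⟦X⟧ K⟦X⟧] (φ : F)

/-- Otherwise, with `c` the constant term of `φ f`, the unit `f - c` would map to the non-unit
`φ f - c`. -/
lemma constantCoeff_algHom_apply_eq_zero {f : K⟦X⟧} (hf : constantCoeff f = 0) :
    constantCoeff (φ f) = 0 := by
  by_contra hc
  have hunit : IsUnit (f - C (constantCoeff (φ f))) := by
    rw [isUnit_iff_constantCoeff]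
    simpa [hf] using hc
  have himage := hunit.map φ
  rw [map_sub, ← algebraMap_eq, AlgHomClass.commutes, algebraMap_eq,
    isUnit_iff_constantCoeff] at himage
  simp at himage

lemma X_pow_dvd_algHom_apply {f : K⟦X⟧} {m : ℕ} (h : X ^ m ∣ f) : X ^ m ∣ φ f := by
  obtain ⟨g, rfl⟩ := h
  rw [map_mul, map_pow]
  exact (pow_dvd_pow_of_dvd (X_dvd_iff.mpr (constantCoeff_algHom_apply_eq_zero φ
    (constantCoeff_X (R := K)))) m).mul_right _

end AlgHom

section SubstC

variable {u : ℂ⟦X⟧}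

@[simp]
lemma coeff_substC (u ρ : ℂ⟦X⟧) (n : ℕ) :
    coeff n (substC u ρ) = ∑ k ∈ Finset.range (n + 1), coeff k ρ * coeff n (u ^ k) :=
  coeff_mk _ _

lemma constantCoeff_substC (u ρ : ℂ⟦X⟧) : constantCoeff (substC u ρ) = constantCoeff ρ := by
  rw [← coeff_zero_eq_constantCoeff_apply, ← coeff_zero_eq_constantCoeff_apply]
  simp

lemma coeff_one_substC (u ρ : ℂ⟦X⟧) : coeff 1 (substC u ρ) = coeff 1 ρ * coeff 1 u := by
  simp [Finset.sum_range_succ, coeff_one]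

lemma X_pow_dvd_substC_sub_aeval_trunc (hu : constantCoeff u = 0) (ρ : ℂ⟦X⟧) (n : ℕ) :
    X ^ (n + 1) ∣ substC u ρ - Polynomial.aeval u (trunc (n + 1) ρ) := by
  rw [X_pow_dvd_iff]
  intro m hm
  rw [map_sub, sub_eq_zero, Polynomial.aeval_eq_sum_range' (natDegree_trunc_lt ρ n), map_sum,
    coeff_substC]
  simp only [coeff_smul, coeff_trunc, smul_eq_mul]
  refine (Finset.sum_subset (Finset.range_subset_range.mpr hm) fun k _ hkm => ?_).trans
    (Finset.sum_congr rfl fun k hk => by rw [if_pos (Finset.mem_range.mp hk)])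
  rw [coeff_pow_eq_zero_of_lt_s14 hu (by simpa using hkm), mul_zero]

/-- An algebra endomorphism of `ℂ⟦X⟧` preserves the `X`-adic filtration, so it commutes with
substitution, which agrees with polynomial evaluation on truncations modulo any power of `X`. -/
lemma map_substC {F : Type*} [FunLike F ℂ⟦X⟧ ℂ⟦X⟧] [AlgHomClass F ℂ ℂ⟦X⟧ ℂ⟦X⟧] (φ : F)
    (hu : constantCoeff u = 0) (ρ : ℂ⟦X⟧) :
    φ (substC u ρ) = substC (φ u) ρ := by
  ext n
  have hsource := X_pow_dvd_algHom_apply φ (X_pow_dvd_substC_sub_aeval_trunc hu ρ n)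
  have htarget := X_pow_dvd_substC_sub_aeval_trunc
    (constantCoeff_algHom_apply_eq_zero φ hu) ρ n
  rw [map_sub, ← Polynomial.aeval_algHom_apply] at hsource
  have hs := X_pow_dvd_iff.mp hsource n (Nat.lt_succ_self n)
  have ht := X_pow_dvd_iff.mp htarget n (Nat.lt_succ_self n)
  rw [map_sub, sub_eq_zero] at hs ht
  rw [hs, ht]

lemma substC_C_mul (a : ℂ) (u ρ : ℂ⟦X⟧) : substC (C a * u) ρ = substC u (rescale a ρ) := by
  ext n
  simp only [coeff_substC, coeff_rescale, mul_pow, ← map_pow, coeff_C_mul]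
  exact Finset.sum_congr rfl fun k _ => by ring

lemma C_mul_substC (a : ℂ) (u ρ : ℂ⟦X⟧) : C a * substC u ρ = substC u (C a * ρ) := by
  ext n
  simp only [coeff_C_mul, coeff_substC, Finset.mul_sum, mul_assoc]

lemma substC_injective (hu0 : constantCoeff u = 0) (hu1 : coeff 1 u ≠ 0) :
    Function.Injective (substC u) := by
  intro ρ ρ' h
  ext n
  induction n using Nat.strong_induction_on with
  | _ n ih =>
    have hn := congrArg (coeff n) h
    rw [coeff_substC, coeff_substC, Finset.sum_range_succ, Finset.sum_range_succ,
      Finset.sum_congr rfl fun k hk => by rw [ih k (Finset.mem_range.mp hk)]] at hn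
    exact mul_right_cancel₀ (by rw [coeff_pow_self hu0]; exact pow_ne_zero n hu1)
      (add_left_cancel hn)

noncomputable def substCPreimageCoeff (u v : ℂ⟦X⟧) : ℕ → ℂ
  | n => (coeff n v - ∑ k ∈ (Finset.range n).attach,
      substCPreimageCoeff u v k * coeff n (u ^ (k : ℕ))) / coeff 1 u ^ n
decreasing_by exact Finset.mem_range.mp k.2

lemma substCPreimageCoeff_eq (u v : ℂ⟦X⟧) (n : ℕ) :
    substCPreimageCoeff u v n = (coeff n v - ∑ k ∈ Finset.range n,
      substCPreimageCoeff u v k * coeff n (u ^ k)) / coeff 1 u ^ n := by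
  rw [substCPreimageCoeff, Finset.sum_attach (Finset.range n)
    (fun k => substCPreimageCoeff u v k * coeff n (u ^ k))]

lemma substC_mk_substCPreimageCoeff (hu0 : constantCoeff u = 0) (hu1 : coeff 1 u ≠ 0)
    (v : ℂ⟦X⟧) : substC u (mk (substCPreimageCoeff u v)) = v := by
  ext n
  rw [coeff_substC, Finset.sum_range_succ]
  simp only [coeff_mk]
  rw [coeff_pow_self hu0, substCPreimageCoeff_eq, div_mul_cancel₀ _ (pow_ne_zero n hu1)]
  ring

lemma substC_bijective (hu0 : constantCoeff u = 0) (hu1 : coeff 1 u ≠ 0) :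
    Function.Bijective (substC u) :=
  ⟨substC_injective hu0 hu1, fun v => ⟨_, substC_mk_substCPreimageCoeff hu0 hu1 v⟩⟩

end SubstC

end PowerSeries

open PowerSeries

lemma IsPrimitiveRoot.modEq_of_pow_eq_pow {M : Type*} [CommMonoid M] {ε : M} {N : ℕ}
    (hε : IsPrimitiveRoot ε N) (hunit : IsUnit ε) {n m : ℕ} (h : ε ^ n = ε ^ m) :
    n ≡ m [MOD N] := by
  obtain ⟨e, rfl⟩ := hunit
  rw [IsPrimitiveRoot.coe_units_iff] at hε
  rw [hε.eq_orderOf]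
  exact pow_eq_pow_iff_modEq.mp (Units.ext (by simpa using h))

lemma isNSpecial_of_rescale_eq {N : ℕ} {ε : ℂ} (hε : IsPrimitiveRoot ε N) (hε0 : ε ≠ 0)
    {ρ : ℂ⟦X⟧} (h0 : constantCoeff ρ = 0) (h1 : coeff 1 ρ ≠ 0) (hρ : rescale ε ρ = C ε * ρ) :
    IsNSpecial N ρ := by
  refine ⟨h0, fun n hn => ?_, h1⟩
  by_contra hc
  have hcoeff := congrArg (coeff n) hρ
  rw [coeff_rescale, coeff_C_mul] at hcoeff
  have hpow : ε ^ n = ε ^ 1 := by rw [pow_one]; exact mul_right_cancel₀ hc hcoeff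
  exact hn (hε.modEq_of_pow_eq_pow hε0.isUnit hpow)

theorem stmt14_general (N : ℕ) (σ : PowerSeries ℂ ≃ₐ[ℂ] PowerSeries ℂ)
    (ε : ℂ) (hε : IsPrimitiveRoot ε N) (u₁ u₂ : PowerSeries ℂ)
    (h10 : PowerSeries.constantCoeff u₁ = 0)
    (h11 : PowerSeries.coeff 1 u₁ ≠ 0)
    (hσ1 : σ u₁ = PowerSeries.C ε * u₁)
    (h20 : PowerSeries.constantCoeff u₂ = 0)
    (h21 : PowerSeries.coeff 1 u₂ ≠ 0)
    (hσ2 : σ u₂ = PowerSeries.C ε * u₂) :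
    ∃! ρ : PowerSeries ℂ, IsNSpecial N ρ ∧ u₂ = PowerSeries.substC u₁ ρ := by
  have hε0 : ε ≠ 0 := by
    rintro rfl
    rw [map_zero, zero_mul, EmbeddingLike.map_eq_zero_iff] at hσ1
    exact h11 (by rw [hσ1, map_zero])
  obtain ⟨ρ, hρ⟩ := (substC_bijective h10 h11).surjective u₂
  have hρ0 : constantCoeff ρ = 0 := by rw [← constantCoeff_substC u₁, hρ, h20]
  have hρ1 : coeff 1 ρ ≠ 0 := by
    rw [← hρ, coeff_one_substC] at h21
    exact left_ne_zero_of_mul h21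
  have hrescale : substC u₁ (rescale ε ρ) = substC u₁ (C ε * ρ) :=
    calc substC u₁ (rescale ε ρ) = substC (C ε * u₁) ρ := (substC_C_mul ε u₁ ρ).symm
      _ = σ (substC u₁ ρ) := by rw [map_substC σ h10, hσ1]
      _ = C ε * substC u₁ ρ := by rw [hρ, hσ2]
      _ = substC u₁ (C ε * ρ) := C_mul_substC ε u₁ ρ
  refine ⟨ρ, ⟨isNSpecial_of_rescale_eq hε hε0 hρ0 hρ1 (substC_injective h10 h11 hrescale),
    hρ.symm⟩, fun ρ' hρ' => substC_injective h10 h11 (hρ'.2.symm.trans hρ.symm)⟩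

/-- The group of `N`-special series acts simply transitively on the set of
special coordinates with eigenvalue `ε`: given two such coordinates `u₁, u₂`,
there is a unique `N`-special `ρ` with `u₂ = ρ ∘ u₁`. -/
theorem stmt14 (N : ℕ) (hN : 1 ≤ N) (σ : PowerSeries ℂ ≃ₐ[ℂ] PowerSeries ℂ)
    (ε : ℂ) (hε : IsPrimitiveRoot ε N) (u₁ u₂ : PowerSeries ℂ)
    (h10 : PowerSeries.constantCoeff u₁ = 0)
    (h11 : PowerSeries.coeff 1 u₁ ≠ 0)
    (hσ1 : σ u₁ = PowerSeries.C ε * u₁)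
    (h20 : PowerSeries.constantCoeff u₂ = 0)
    (h21 : PowerSeries.coeff 1 u₂ ≠ 0)
    (hσ2 : σ u₂ = PowerSeries.C ε * u₂) :
    ∃! ρ : PowerSeries ℂ, IsNSpecial N ρ ∧ u₂ = PowerSeries.substC u₁ ρ :=
  stmt14_general N σ ε hε u₁ u₂ h10 h11 hσ1 h20 h21 hσ2
end
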